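/- Let (E,H,(·|·)) and (E,H',(·|·)') be two extended affine Lie algebra structures on the same Lie algebra E over a field k of characteristic 0; their cores coincide, E_c = E'_c. Then there exists a nonzero scalar a ∈ k such that (x|y)' = a·(x|y) for all x, y ∈ E_c, i.e. the restrictions of the two invariant forms to the common core are proportional. -/

import Mathlib

section EALA

variable {k E : Type*} [Field k] [CharZero k] [LieRing E] [LieAlgebra k E]

/-- The weight space of the toral subalgebra `H` for the weight `α ∈ H*`:
`E_α = {e ∈ E : [h,e] = α(h)e for all h ∈ H}`. -/
def wtSpace (H : LieSubalgebra k E) (α : Module.Dual k H) : Submodule k E where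
  carrier := {e | ∀ h : H, ⁅(h : E), e⁆ = α h • e}
  add_mem' := by
    intro a b ha hb h
    simp only [lie_add, ha h, hb h, smul_add]
  zero_mem' := by
    intro h
    simp
  smul_mem' := by
    intro c a ha h
    rw [lie_smul, ha h, smul_comm]

/-- The set of roots `Ψ` of `(E,H)`: those `α ∈ H*` with `E_α ≠ 0` (note `0 ∈ Ψ`). -/
def rootSet (H : LieSubalgebra k E) : Set (Module.Dual k H) :=
  {α | wtSpace H α ≠ ⊥}

variable (B : E →ₗ[k] E →ₗ[k] k)

/-- The representatives `t_α ∈ H` of `α ∈ H*` under the form: `(t_α | h) = α(h)` for `h ∈ H`. -/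
def reps (H : LieSubalgebra k E) (α : Module.Dual k H) : Set H :=
  {t | ∀ h : H, B (t : E) (h : E) = α h}

/-- The anisotropic roots: `Ψ^an = {α ∈ Ψ : (α|α) ≠ 0}`. -/
def anisoRootSet (H : LieSubalgebra k E) : Set (Module.Dual k H) :=
  {α | α ∈ rootSet H ∧ ∃ t ∈ reps B H α, B (t : E) (t : E) ≠ 0}

/-- The isotropic (null) roots: `Ψ⁰ = {α ∈ Ψ : (α|α) = 0}`. -/
def isoRootSet (H : LieSubalgebra k E) : Set (Module.Dual k H) :=
  {α | α ∈ rootSet H ∧ ∃ t ∈ reps B H α, B (t : E) (t : E) = 0}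

/-- The core `E_c` of `(E, H, (·|·))`: the subalgebra of `E` generated by
`⋃_{α ∈ Ψ^an} E_α`. -/
def core (H : LieSubalgebra k E) : LieSubalgebra k E :=
  LieSubalgebra.lieSpan k E (⋃ α ∈ anisoRootSet B H, (wtSpace H α : Set E))

/-- An extended affine Lie algebra structure `(E, H, (·|·))` (paper §2.3):
axioms (EA1)–(EA5), together with the requirements that the bilinear form is
nondegenerate, symmetric and invariant. -/
structure IsEALA (H : LieSubalgebra k E) : Prop where
  /-- the form is symmetric -/
  symm : ∀ x y : E, B x y = B y x
  /-- the form is invariant -/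
  invariant : ∀ x y z : E, B ⁅x, y⁆ z = B x ⁅y, z⁆
  /-- the form is nondegenerate -/
  nondeg : ∀ x : E, (∀ y : E, B x y = 0) → x = 0
  /-- (EA1): `H` is nontrivial … -/
  H_ne_bot : H ≠ ⊥
  /-- … finite-dimensional … -/
  H_fd : FiniteDimensional k H
  /-- … self-centralizing (in particular abelian): `E_0 = H` … -/
  self_centralizing : wtSpace H 0 = H.toSubmodule
  /-- … and toral: `E = ⊕_{α ∈ H*} E_α` -/
  toral : (⨆ α : Module.Dual k H, wtSpace H α) = ⊤
  /-- the restriction of the form to `H × H` is nondegenerate -/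
  H_nondeg : ∀ t : H, (∀ h : H, B (t : E) (h : E) = 0) → t = 0
  /-- (EA2): `ad x` is locally nilpotent for `x ∈ E_α`, `α ∈ Ψ^an` -/
  ea2 : ∀ α ∈ anisoRootSet B H, ∀ x ∈ wtSpace H α, ∀ e : E,
    ∃ N : ℕ, (fun y => ⁅x, y⁆)^[N] e = 0
  /-- (EA3): `Ψ^an` is connected -/
  ea3 : ∀ Ψ₁ Ψ₂ : Set (Module.Dual k H), anisoRootSet B H = Ψ₁ ∪ Ψ₂ →
    Ψ₁.Nonempty → Ψ₂.Nonempty →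
    ∃ α ∈ Ψ₁, ∃ β ∈ Ψ₂, ∃ t ∈ reps B H α, ∃ s ∈ reps B H β, B (t : E) (s : E) ≠ 0
  /-- (EA4): the centralizer of the core is contained in the core -/
  ea4 : ∀ e : E, (∀ x ∈ core B H, ⁅e, x⁆ = 0) → e ∈ core B H
  /-- (EA5): the subgroup of `(H*,+)` generated by `Ψ⁰` is free abelian of finite rank -/
  ea5 : ∃ n : ℕ, Nonempty ((AddSubgroup.closure (isoRootSet B H)) ≃+ (Fin n → ℤ))

end EALA

/-!
Fix an anisotropic root `γ` with representative `t_γ ∈ H`. For `x ∈ E_γ`, `y ∈ E_{-γ}` the bracket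
`[x, y]` lies in `E_0 = H`, and nondegeneracy of `(·|·)` on `H` forces `[x, y] = (x|y) t_γ`.
Pairing with `t_γ` under any invariant form `C` then gives `C(x, y) = c_γ (x|y)` with
`c_γ = C(t_γ, t_γ) / (t_γ|t_γ)`, and also `C(t_γ, ·) = c_γ (t_γ|·)` on `H`. If `(t_α|t_β) ≠ 0`,
symmetry of both forms gives `c_α = c_β`, so by connectedness (EA3) all `c_γ` equal one `a`,
nonzero by nondegeneracy of `C`. The radical of the invariant form `C - a(·|·)` is a
subalgebra containing every `E_γ` with `γ` anisotropic (toral decomposition and orthogonality of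
weight spaces), hence it contains the core.
-/

section Proportionality

variable {k E : Type*} [Field k] [LieRing E] [LieAlgebra k E]

def kerLieSubalgebra (D : E →ₗ[k] E →ₗ[k] k) (hD : ∀ x y z : E, D ⁅x, y⁆ z = D x ⁅y, z⁆) :
    LieSubalgebra k E :=
  { LinearMap.ker D with
    lie_mem' := fun {x y} hx _ => by
      change D x = 0 at hx
      change D ⁅x, y⁆ = 0
      ext w
      rw [LinearMap.zero_apply, hD, hx, LinearMap.zero_apply] }

lemma mem_kerLieSubalgebra {D : E →ₗ[k] E →ₗ[k] k} {hD : ∀ x y z : E, D ⁅x, y⁆ z = D x ⁅y, z⁆}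
    {x : E} : x ∈ kerLieSubalgebra D hD ↔ D x = 0 :=
  LinearMap.mem_ker

variable {H : LieSubalgebra k E} {C : E →ₗ[k] E →ₗ[k] k} {γ : Module.Dual k H} {x y : E}

lemma lie_mem_wtSpace_zero (hx : x ∈ wtSpace H γ) (hy : y ∈ wtSpace H (-γ)) :
    ⁅x, y⁆ ∈ wtSpace H 0 := by
  intro h
  rw [leibniz_lie, hx h, hy h, smul_lie, lie_smul]
  simp

lemma apply_lie_of_mem_wtSpace (hC : ∀ x y z : E, C ⁅x, y⁆ z = C x ⁅y, z⁆)
    (hy : y ∈ wtSpace H (-γ)) (h : H) :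
    C ⁅x, y⁆ h = γ h * C x y := by
  rw [hC, ← lie_skew, hy h, LinearMap.neg_apply, neg_smul, neg_neg, map_smul, smul_eq_mul]

lemma apply_eq_zero_of_mem_wtSpace (hC : ∀ x y z : E, C ⁅x, y⁆ z = C x ⁅y, z⁆)
    {δ : Module.Dual k H} (hγδ : γ + δ ≠ 0) (hx : x ∈ wtSpace H γ) (hy : y ∈ wtSpace H δ) :
    C x y = 0 := by
  obtain ⟨h, hh⟩ : ∃ h : H, γ h + δ h ≠ 0 := by
    by_contra! hcon
    exact hγδ (LinearMap.ext hcon)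
  have hγ : C ⁅(h : E), x⁆ y = γ h * C x y := by
    rw [hx h, map_smul, LinearMap.smul_apply, smul_eq_mul]
  have hδ : C ⁅(h : E), x⁆ y = -(δ h * C x y) := by
    rw [← lie_skew, map_neg, LinearMap.neg_apply, hC, hy h, map_smul, smul_eq_mul]
  have : (γ h + δ h) * C x y = 0 := by linear_combination hδ - hγ
  exact (mul_eq_zero.mp this).resolve_left hh

lemma apply_eq_zero_of_forall_mem_wtSpace_neg (htoral : (⨆ α : Module.Dual k H, wtSpace H α) = ⊤)
    (hC : ∀ x y z : E, C ⁅x, y⁆ z = C x ⁅y, z⁆) (hx : x ∈ wtSpace H γ)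
    (hxy : ∀ y ∈ wtSpace H (-γ), C x y = 0) : C x = 0 := by
  ext w
  have hw : w ∈ ⨆ α : Module.Dual k H, wtSpace H α := htoral ▸ Submodule.mem_top
  induction hw using Submodule.iSup_induction' with
  | mem δ y hy =>
    by_cases hδ : γ + δ = 0
    · exact hxy y (eq_neg_of_add_eq_zero_right hδ ▸ hy)
    · exact apply_eq_zero_of_mem_wtSpace hC hδ hx hy
  | zero => simp
  | add y z _ _ hy hz => simp_all

lemma exists_mem_wtSpace_neg_apply_ne_zero
    (htoral : (⨆ α : Module.Dual k H, wtSpace H α) = ⊤)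
    (hC : ∀ x y z : E, C ⁅x, y⁆ z = C x ⁅y, z⁆) (hCnondeg : ∀ x : E, (∀ y : E, C x y = 0) → x = 0)
    (hx : x ∈ wtSpace H γ) (hx0 : x ≠ 0) : ∃ y ∈ wtSpace H (-γ), C x y ≠ 0 := by
  by_contra! hcon
  exact hx0 <| hCnondeg x <| LinearMap.congr_fun <|
    apply_eq_zero_of_forall_mem_wtSpace_neg htoral hC hx hcon

namespace IsEALA

variable {B : E →ₗ[k] E →ₗ[k] k} {t s : H}

lemma reps_subsingleton (hB : IsEALA B H) : (reps B H γ).Subsingleton := by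
  intro t ht s hs
  rw [← sub_eq_zero]
  refine hB.H_nondeg _ fun h => ?_
  simp only [AddSubgroupClass.coe_sub, map_sub, LinearMap.sub_apply, ht h, hs h, sub_self]

lemma apply_self_ne_zero_of_mem_reps (hB : IsEALA B H) (hγ : γ ∈ anisoRootSet B H)
    (ht : t ∈ reps B H γ) : B t t ≠ 0 := by
  obtain ⟨-, s, hs, hss⟩ := hγ
  rwa [hB.reps_subsingleton ht hs]

lemma anisoRootSet_nonempty (hB : IsEALA B H) : (anisoRootSet B H).Nonempty := by
  by_contra hempty
  have hcore : core B H = ⊥ := by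
    rw [eq_bot_iff, core, LieSubalgebra.lieSpan_le, Set.not_nonempty_iff_eq_empty.mp hempty]
    simp
  have hall : ∀ e : E, e = 0 := fun e => by
    simpa [hcore] using hB.ea4 e (by simp [hcore])
  exact hB.H_ne_bot (eq_bot_iff.mpr fun x _ => hall x)

lemma lie_eq_smul_of_mem_reps (hB : IsEALA B H) (ht : t ∈ reps B H γ)
    (hx : x ∈ wtSpace H γ) (hy : y ∈ wtSpace H (-γ)) : ⁅x, y⁆ = B x y • (t : E) := by
  have hxyH : ⁅x, y⁆ ∈ H := by
    simpa [hB.self_centralizing] using lie_mem_wtSpace_zero hx hy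
  suffices (⟨⁅x, y⁆, hxyH⟩ : H) - B x y • t = 0 by
    simpa [sub_eq_zero] using congrArg Subtype.val this
  refine hB.H_nondeg _ fun h => ?_
  simp only [AddSubgroupClass.coe_sub, SetLike.val_smul, map_sub, map_smul,
    LinearMap.sub_apply, LinearMap.smul_apply, smul_eq_mul, ht h,
    apply_lie_of_mem_wtSpace hB.invariant hy h]
  ring

lemma apply_eq_mul_of_mem_reps (hB : IsEALA B H) (hC : ∀ x y z : E, C ⁅x, y⁆ z = C x ⁅y, z⁆)
    (hγ : γ ∈ anisoRootSet B H) (ht : t ∈ reps B H γ)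
    (hx : x ∈ wtSpace H γ) (hy : y ∈ wtSpace H (-γ)) : C x y = C t t / B t t * B x y := by
  have htt := hB.apply_self_ne_zero_of_mem_reps hγ ht
  have hpair := apply_lie_of_mem_wtSpace (x := x) hC hy t
  rw [hB.lie_eq_smul_of_mem_reps ht hx hy, map_smul, LinearMap.smul_apply, smul_eq_mul,
    ← ht t] at hpair
  field_simp
  linear_combination -hpair

lemma apply_rep_eq_mul (hB : IsEALA B H) (hC : ∀ x y z : E, C ⁅x, y⁆ z = C x ⁅y, z⁆)
    (hγ : γ ∈ anisoRootSet B H) (ht : t ∈ reps B H γ) (h : H) :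
    C t h = C t t / B t t * B t h := by
  obtain ⟨x, hx, hx0⟩ := Submodule.exists_mem_ne_zero_of_ne_bot hγ.1
  obtain ⟨y, hy, hxy⟩ :=
    exists_mem_wtSpace_neg_apply_ne_zero hB.toral hB.invariant hB.nondeg hx hx0
  have hpair := apply_lie_of_mem_wtSpace (x := x) hC hy h
  rw [hB.lie_eq_smul_of_mem_reps ht hx hy, map_smul, LinearMap.smul_apply, smul_eq_mul,
    hB.apply_eq_mul_of_mem_reps hC hγ ht hx hy, ← ht h] at hpair
  apply mul_left_cancel₀ hxy
  linear_combination hpair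

lemma ratio_ne_zero (hB : IsEALA B H) (hC : ∀ x y z : E, C ⁅x, y⁆ z = C x ⁅y, z⁆)
    (hCnondeg : ∀ x : E, (∀ y : E, C x y = 0) → x = 0)
    (hγ : γ ∈ anisoRootSet B H) (ht : t ∈ reps B H γ) : C t t / B t t ≠ 0 := by
  obtain ⟨x, hx, hx0⟩ := Submodule.exists_mem_ne_zero_of_ne_bot hγ.1
  obtain ⟨y, hy, hxy⟩ := exists_mem_wtSpace_neg_apply_ne_zero hB.toral hC hCnondeg hx hx0
  rw [hB.apply_eq_mul_of_mem_reps hC hγ ht hx hy] at hxy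
  exact left_ne_zero_of_mul hxy

lemma ratio_eq_of_apply_ne_zero (hB : IsEALA B H) (hC : ∀ x y z : E, C ⁅x, y⁆ z = C x ⁅y, z⁆)
    (hCsymm : ∀ x y : E, C x y = C y x) {α β : Module.Dual k H}
    (hα : α ∈ anisoRootSet B H) (ht : t ∈ reps B H α)
    (hβ : β ∈ anisoRootSet B H) (hs : s ∈ reps B H β) (hts : B t s ≠ 0) :
    C t t / B t t = C s s / B s s := by
  have hts' := hB.apply_rep_eq_mul hC hα ht s
  rw [hCsymm, hB.apply_rep_eq_mul hC hβ hs t, hB.symm s t] at hts'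
  exact (mul_right_cancel₀ hts hts').symm

lemma ratio_eq (hB : IsEALA B H) (hC : ∀ x y z : E, C ⁅x, y⁆ z = C x ⁅y, z⁆)
    (hCsymm : ∀ x y : E, C x y = C y x) {α β : Module.Dual k H}
    (hα : α ∈ anisoRootSet B H) (ht : t ∈ reps B H α)
    (hβ : β ∈ anisoRootSet B H) (hs : s ∈ reps B H β) :
    C t t / B t t = C s s / B s s := by
  set Ψ₁ := {γ ∈ anisoRootSet B H | ∀ u ∈ reps B H γ, C u u / B u u = C t t / B t t}
  have hΨ₁ : Ψ₁ ⊆ anisoRootSet B H := fun _ hγ => hγ.1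
  by_contra hne
  have hβΨ₁ : β ∉ Ψ₁ := fun hβ' => hne (hβ'.2 s hs).symm
  obtain ⟨α', hα', β', hβ', u, hu, v, hv, huv⟩ :=
    hB.ea3 Ψ₁ (anisoRootSet B H \ Ψ₁) (Set.union_sdiff_cancel hΨ₁).symm
      ⟨α, hα, fun u hu => by rw [hB.reps_subsingleton hu ht]⟩ ⟨β, hβ, hβΨ₁⟩
  refine hβ'.2 ⟨hβ'.1, fun w hw => ?_⟩
  rw [hB.reps_subsingleton hw hv, ← hα'.2 u hu]
  exact (hB.ratio_eq_of_apply_ne_zero hC hCsymm hα'.1 hu hβ'.1 hv huv).symm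

lemma apply_eq_smul_of_mem_core (hB : IsEALA B H) (hC : ∀ x y z : E, C ⁅x, y⁆ z = C x ⁅y, z⁆)
    (hCsymm : ∀ x y : E, C x y = C y x) {α : Module.Dual k H}
    (hα : α ∈ anisoRootSet B H) (ht : t ∈ reps B H α) (hx : x ∈ core B H) :
    C x = (C t t / B t t) • B x := by
  set D := C - (C t t / B t t) • B
  have hD : ∀ x y z : E, D ⁅x, y⁆ z = D x ⁅y, z⁆ := fun x y z => by
    simp [D, hC, hB.invariant]
  suffices core B H ≤ kerLieSubalgebra D hD by
    simpa [D, sub_eq_zero] using mem_kerLieSubalgebra.mp (this hx)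
  refine LieSubalgebra.lieSpan_le.mpr fun x hx => ?_
  simp only [Set.mem_iUnion, SetLike.mem_coe] at hx
  obtain ⟨γ, hγ, hx⟩ := hx
  obtain ⟨s, hs, -⟩ := hγ.2
  refine mem_kerLieSubalgebra.mpr <|
    apply_eq_zero_of_forall_mem_wtSpace_neg hB.toral hD hx fun y hy => ?_
  rw [LinearMap.sub_apply, LinearMap.sub_apply, hB.apply_eq_mul_of_mem_reps hC hγ hs hx hy,
    hB.ratio_eq hC hCsymm hγ hs hα ht, LinearMap.smul_apply, LinearMap.smul_apply, smul_eq_mul,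
    sub_self]

end IsEALA

end Proportionality

theorem eala_forms_proportional_on_core_general
    {k E : Type*} [Field k] [LieRing E] [LieAlgebra k E]
    (B : E →ₗ[k] E →ₗ[k] k) (H : LieSubalgebra k E) (h : IsEALA B H)
    (B' : E →ₗ[k] E →ₗ[k] k) (H' : LieSubalgebra k E) (h' : IsEALA B' H') :
    ∃ a : k, a ≠ 0 ∧ ∀ x ∈ core B H, ∀ y ∈ core B H, B' x y = a * B x y := by
  obtain ⟨α, hα⟩ := h.anisoRootSet_nonempty
  obtain ⟨t, ht, -⟩ := hα.2
  refine ⟨B' t t / B t t, h.ratio_ne_zero h'.invariant h'.nondeg hα ht, fun x hx y _ => ?_⟩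
  simpa using LinearMap.congr_fun (h.apply_eq_smul_of_mem_core h'.invariant h'.symm hα ht hx) y

/-- Corollary 3.3(b) of the paper: the restrictions to the common core
of the invariant forms of two EALA structures on the same Lie algebra `E` are
proportional: there is `0 ≠ a ∈ k` with `(x|y)' = a·(x|y)` for all `x, y ∈ E_c`. -/
theorem eala_forms_proportional_on_core
    {k E : Type*} [Field k] [CharZero k] [LieRing E] [LieAlgebra k E]
    (B : E →ₗ[k] E →ₗ[k] k) (H : LieSubalgebra k E) (h : IsEALA B H)
    (B' : E →ₗ[k] E →ₗ[k] k) (H' : LieSubalgebra k E) (h' : IsEALA B' H')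
    -- the cores of the two structures coincide (Corollary 3.2 of the paper)
    (hcores : core B H = core B' H') :
    ∃ a : k, a ≠ 0 ∧ ∀ x ∈ core B H, ∀ y ∈ core B H, B' x y = a * B x y :=
  eala_forms_proportional_on_core_general B H h B' H' h'
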